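/- arXiv:2605.06409 — 2 statements merged into one kernel-verified Lean document; each statement's English description precedes it below -/
import Mathlib

section
/- Let u : S → ℝ be a function on a set S with a partial boundary notion, such that u attains its maximum at an interior point p where u is twice differentiable with vanishing gradient and nonpositive-definite Hessian. Suppose u satisfies at interior critical points the equation Δu(p) = m(e^{u(p)} h(p, e^{u(p)}) − 1), where h : S × (0,∞) → ℝ satisfies: (i) t ↦ t·h(q, t) is nondecreasing for each q, and (ii) L·h(q, L) > 1 for all q, for some L ≥ 1. Then u(p) ≤ ln L. -/
/-- Abstract height estimate at an interior maximum: if at the maximum point `p`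
the Laplacian satisfies the mean curvature equation
`Δu(p) = m (e^{u(p)} h(p, e^{u(p)}) - 1)` together with `Δu(p) ≤ 0` (from the
vanishing gradient and nonpositive Hessian at the interior maximum), and
`t ↦ t h(q,t)` is nondecreasing with `L h(q,L) > 1` for some `L ≥ 1`, then
`u(p) ≤ ln L`. -/
theorem abstract_height_estimate {S : Type*} (u : S → ℝ) (p : S)
    (hmax : ∀ q, u q ≤ u p)
    (lap : ℝ) (hlap : lap ≤ 0)
    (m : ℕ) (hm : 1 ≤ m)
    (h : S → ℝ → ℝ)
    (heq : lap = (m : ℝ) * (Real.exp (u p) * h p (Real.exp (u p)) - 1))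
    (L : ℝ) (hL1 : 1 ≤ L)
    (hmono : ∀ q, MonotoneOn (fun t => t * h q t) (Set.Ioi (0 : ℝ)))
    (hLbig : ∀ q, 1 < L * h q L) :
    u p ≤ Real.log L := by
  by_contra hc
  push_neg at hc
  have hL0 : (0:ℝ) < L := lt_of_lt_of_le one_pos hL1
  have hE : L < Real.exp (u p) := by
    have := Real.exp_lt_exp.mpr hc
    rwa [Real.exp_log hL0] at this
  have hmem : Real.exp (u p) ∈ Set.Ioi (0:ℝ) := Real.exp_pos _
  have h1 : L * h p L ≤ Real.exp (u p) * h p (Real.exp (u p)) :=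
    hmono p (Set.mem_Ioi.mpr hL0) hmem hE.le
  have h2 : (1:ℝ) < Real.exp (u p) * h p (Real.exp (u p)) := lt_of_lt_of_le (hLbig p) h1
  have hmpos : (0:ℝ) < (m:ℝ) := by exact_mod_cast hm
  have : (0:ℝ) < lap := by
    rw [heq]; nlinarith
  linarith
end

section
/- Let f : ℝ^m → ℝ be C² with |∇f| < 1, set φ = (1 − |∇f|²)^{-1/2}, and let H = (1/m)·tr_g(φ ∇²f) be the mean curvature of the graph of f, where g_{ij} = δ_{ij} − f_i f_j. Suppose ∇f restricted to the set Σ⁺ = {∇²f ≥ 0} is surjective onto the unit ball B^m. Then ∫_{ℝ^m} |H|^m φ^{-m-2} dx ≥ |B^m|. -/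
/-!
Since `det g = 1 - |∇f|² = φ⁻²`, the matrix `g⁻¹ (φ ∇²f)` has determinant `φ^{m+2} det ∇²f`.
On `Σ⁺` it is similar (conjugate by `√(g⁻¹)`) to a positive semidefinite matrix, so AM–GM on
its eigenvalues gives `φ^{m+2} det ∇²f ≤ H^m`. The area formula for `∇f` on `Σ⁺`, whose image
contains the unit ball, gives `|B^m| ≤ ∫_{Σ⁺} det ∇²f dx`, and the pointwise bound finishes.
-/

open MeasureTheory

/-- The Hessian matrix of `f : ℝ^m → ℝ` at `x`. -/
noncomputable def hessianMatrix {m : ℕ} (f : EuclideanSpace ℝ (Fin m) → ℝ)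
    (x : EuclideanSpace ℝ (Fin m)) : Matrix (Fin m) (Fin m) ℝ :=
  fun i j => fderiv ℝ (gradient f) x (EuclideanSpace.single j 1) i

/-- The induced metric `g_{ij} = δ_{ij} - f_i f_j` on the spacelike graph of `f`. -/
noncomputable def graphMetric {m : ℕ} (f : EuclideanSpace ℝ (Fin m) → ℝ)
    (x : EuclideanSpace ℝ (Fin m)) : Matrix (Fin m) (Fin m) ℝ :=
  1 - Matrix.vecMulVec (fun i => gradient f x i) (fun i => gradient f x i)

/-- The tilt function `φ = (1 - ‖∇f‖²)^{-1/2}`. -/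
noncomputable def tiltFn {m : ℕ} (f : EuclideanSpace ℝ (Fin m) → ℝ)
    (x : EuclideanSpace ℝ (Fin m)) : ℝ :=
  (1 - ‖gradient f x‖ ^ 2) ^ (-(1 : ℝ) / 2)

/-- The mean curvature `H = (1/m) tr_g(φ ∇²f)` of the spacelike graph of `f`. -/
noncomputable def meanCurvFn {m : ℕ} (f : EuclideanSpace ℝ (Fin m) → ℝ)
    (x : EuclideanSpace ℝ (Fin m)) : ℝ :=
  (1 / m) * ((graphMetric f x)⁻¹ * (tiltFn f x • hessianMatrix f x)).trace

theorem Real.prod_le_sum_div_card_pow {ι : Type*} (s : Finset ι) {z : ι → ℝ}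
    (hz : ∀ i ∈ s, 0 ≤ z i) : ∏ i ∈ s, z i ≤ ((∑ i ∈ s, z i) / s.card) ^ s.card := by
  rcases s.eq_empty_or_nonempty with rfl | hs
  · simp
  have hk : (s.card : ℝ) ≠ 0 := by exact_mod_cast hs.card_pos.ne'
  have amgm := Real.geom_mean_le_arith_mean_weighted s (fun _ => (s.card : ℝ)⁻¹) z
    (fun _ _ => by positivity) (by simp [hk]) hz
  rw [Real.finsetProd_rpow s z hz, ← Finset.mul_sum, inv_mul_eq_div] at amgm
  calc ∏ i ∈ s, z i = ((∏ i ∈ s, z i) ^ (s.card⁻¹ : ℝ)) ^ s.card :=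
        (Real.rpow_inv_natCast_pow (Finset.prod_nonneg hz) hs.card_pos.ne').symm
    _ ≤ _ := pow_le_pow_left₀ (Real.rpow_nonneg (Finset.prod_nonneg hz) _) amgm _

namespace Matrix

variable {n : Type*} [Fintype n]

theorem isClosed_setOf_posSemidef : IsClosed {A : Matrix n n ℝ | A.PosSemidef} := by
  simp only [posSemidef_iff_dotProduct_mulVec, Set.ofPred_and, Set.ofPred_forall]
  exact (isClosed_eq continuous_id.matrix_conjTranspose continuous_id).inter <|
    isClosed_iInter fun v => isClosed_le continuous_const <|
      continuous_const.dotProduct (continuous_id.matrix_mulVec continuous_const)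

variable [DecidableEq n]

theorem PosSemidef.det_le_trace_div_card_pow {A : Matrix n n ℝ} (hA : A.PosSemidef) :
    A.det ≤ (A.trace / Fintype.card n) ^ Fintype.card n := by
  rw [hA.1.det_eq_prod_eigenvalues, hA.1.trace_eq_sum_eigenvalues]
  simpa using Real.prod_le_sum_div_card_pow Finset.univ fun i _ => hA.eigenvalues_nonneg i

open scoped MatrixOrder in
theorem PosSemidef.det_mul_le_trace_mul_div_card_pow {G A : Matrix n n ℝ} (hG : G.PosSemidef)
    (hA : A.PosSemidef) : (G * A).det ≤ ((G * A).trace / Fintype.card n) ^ Fintype.card n := by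
  -- `√G * A * √G` is positive semidefinite, with the trace and determinant of `G * A`
  obtain ⟨S, hSS, hS⟩ : ∃ S : Matrix n n ℝ, S * S = G ∧ Sᴴ = S :=
    ⟨CFC.sqrt G, CFC.sqrt_mul_sqrt_self G hG.nonneg,
      (nonneg_iff_posSemidef.mp (CFC.sqrt_nonneg G)).1⟩
  have hN : (S * A * S).PosSemidef := by simpa only [hS] using hA.mul_mul_conjTranspose_same S
  have htrace : (S * A * S).trace = (G * A).trace := by
    rw [trace_mul_comm, ← mul_assoc, hSS]
  have hdet : (S * A * S).det = (G * A).det := by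
    simp only [← hSS, det_mul]; ring
  rw [← htrace, ← hdet]
  exact hN.det_le_trace_div_card_pow

theorem det_one_sub_vecMulVec {R : Type*} [CommRing R] (u v : n → R) :
    (1 - vecMulVec u v).det = 1 - v ⬝ᵥ u := by
  rw [sub_eq_add_neg, ← neg_vecMulVec, vecMulVec_eq Unit, det_one_add_replicateCol_mul_replicateRow,
    dotProduct_neg, ← sub_eq_add_neg]

theorem posSemidef_one_sub_vecMulVec_self {q : n → ℝ} (hq : q ⬝ᵥ q ≤ 1) :
    (1 - vecMulVec q q).PosSemidef := by
  refine .of_dotProduct_mulVec_nonneg ?_ fun v => ?_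
  · simp [IsHermitian]
  · have hcs : (q ⬝ᵥ v) ^ 2 ≤ (q ⬝ᵥ q) * (v ⬝ᵥ v) := by
      simpa only [dotProduct, sq] using Finset.sum_mul_sq_le_sq_mul_sq Finset.univ q v
    have hvv : 0 ≤ v ⬝ᵥ v := by simpa using dotProduct_star_self_nonneg v
    simp only [star_trivial, sub_mulVec, one_mulVec, dotProduct_sub, vecMulVec_mulVec,
      op_smul_eq_smul, dotProduct_smul, smul_eq_mul, dotProduct_comm v q]
    nlinarith

end Matrix

theorem EuclideanSpace.dotProduct_self_eq_norm_sq {n : Type*} [Fintype n]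
    (p : EuclideanSpace ℝ n) : (fun i => p i) ⬝ᵥ (fun i => p i) = ‖p‖ ^ 2 := by
  rw [EuclideanSpace.real_norm_sq_eq]
  simp only [dotProduct, sq]

theorem ContDiff.gradient {F : Type*} [NormedAddCommGroup F] [InnerProductSpace ℝ F]
    [CompleteSpace F] {f : F → ℝ} {n : WithTop ℕ∞} (hf : ContDiff ℝ (n + 1) f) :
    ContDiff ℝ n (_root_.gradient f) :=
  (InnerProductSpace.toDual ℝ F).symm.contDiff.comp (hf.fderiv_right le_rfl)

open Matrix

section SpacelikeGraph

variable {m : ℕ} (f : EuclideanSpace ℝ (Fin m) → ℝ) (x : EuclideanSpace ℝ (Fin m))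

theorem det_graphMetric : (graphMetric f x).det = 1 - ‖gradient f x‖ ^ 2 := by
  rw [graphMetric, det_one_sub_vecMulVec, EuclideanSpace.dotProduct_self_eq_norm_sq]

theorem posSemidef_graphMetric (hx : ‖gradient f x‖ ≤ 1) : (graphMetric f x).PosSemidef := by
  refine posSemidef_one_sub_vecMulVec_self ?_
  rw [EuclideanSpace.dotProduct_self_eq_norm_sq]
  exact pow_le_one₀ (norm_nonneg _) hx

theorem tiltFn_pos (hx : ‖gradient f x‖ < 1) : 0 < tiltFn f x :=
  Real.rpow_pos_of_pos (by nlinarith [norm_nonneg (gradient f x)]) _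

theorem tiltFn_sq (hx : ‖gradient f x‖ ≤ 1) : tiltFn f x ^ 2 = (1 - ‖gradient f x‖ ^ 2)⁻¹ := by
  have hc : 0 ≤ 1 - ‖gradient f x‖ ^ 2 := by nlinarith [norm_nonneg (gradient f x)]
  rw [tiltFn, ← Real.rpow_natCast, ← Real.rpow_mul hc]
  norm_num [Real.rpow_neg_one]

theorem det_graphMetric_inv_mul_tiltFn_smul_hessianMatrix (hx : ‖gradient f x‖ ≤ 1) :
    ((graphMetric f x)⁻¹ * (tiltFn f x • hessianMatrix f x)).det =
      tiltFn f x ^ (m + 2) * (hessianMatrix f x).det := by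
  rw [det_mul, det_nonsing_inv, det_graphMetric, Ring.inverse_eq_inv', ← tiltFn_sq f x hx, det_smul,
    Fintype.card_fin]
  ring

theorem det_hessianMatrix_le_of_posSemidef (hx : ‖gradient f x‖ < 1)
    (hA : (hessianMatrix f x).PosSemidef) :
    (hessianMatrix f x).det ≤ |meanCurvFn f x| ^ m * tiltFn f x ^ (-(m : ℝ) - 2) := by
  have hφ := tiltFn_pos f x hx
  have hAMGM : tiltFn f x ^ (m + 2) * (hessianMatrix f x).det ≤ |meanCurvFn f x| ^ m := by
    rw [← det_graphMetric_inv_mul_tiltFn_smul_hessianMatrix f x hx.le]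
    refine ((posSemidef_graphMetric f x hx.le).inv.det_mul_le_trace_mul_div_card_pow
      (hA.smul hφ.le)).trans ?_
    rw [Fintype.card_fin, meanCurvFn, one_div_mul_eq_div, ← abs_pow]
    exact le_abs_self _
  have hpow : tiltFn f x ^ (-(m : ℝ) - 2) = (tiltFn f x ^ (m + 2))⁻¹ := by
    rw [show -(m : ℝ) - 2 = -((m + 2 : ℕ) : ℝ) by push_cast; ring, Real.rpow_neg hφ.le,
      Real.rpow_natCast]
  calc (hessianMatrix f x).det
      = (tiltFn f x ^ (m + 2))⁻¹ * (tiltFn f x ^ (m + 2) * (hessianMatrix f x).det) := by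
        field_simp
    _ ≤ (tiltFn f x ^ (m + 2))⁻¹ * |meanCurvFn f x| ^ m := by gcongr
    _ = |meanCurvFn f x| ^ m * tiltFn f x ^ (-(m : ℝ) - 2) := by rw [hpow, mul_comm]

theorem hessianMatrix_eq_toMatrix : hessianMatrix f x =
    LinearMap.toMatrix (EuclideanSpace.basisFun (Fin m) ℝ).toBasis
      (EuclideanSpace.basisFun (Fin m) ℝ).toBasis (fderiv ℝ (gradient f) x).toLinearMap := by
  ext i j
  simp [hessianMatrix, LinearMap.toMatrix_apply]

theorem det_hessianMatrix : (hessianMatrix f x).det = (fderiv ℝ (gradient f) x).det := by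
  rw [hessianMatrix_eq_toMatrix, LinearMap.det_toMatrix]

variable {f} in
theorem continuous_hessianMatrix (hf : ContDiff ℝ 2 f) : Continuous (hessianMatrix f) := by
  have h := ((hf.gradient (n := 1)).continuous_fderiv one_ne_zero)
  exact continuous_matrix fun i j =>
    (EuclideanSpace.proj i).continuous.comp (h.clm_apply continuous_const)

end SpacelikeGraph

/-- Willmore-type inequality in Cartesian coordinates: if `f` is `C²` spacelike and
the gradient map restricted to `Σ⁺ = {∇²f ≥ 0}` is onto the unit ball, then
`∫ |H|^m φ^{-m-2} dx ≥ |B^m|`. -/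
theorem willmore_inequality_cartesian {m : ℕ}
    (f : EuclideanSpace ℝ (Fin m) → ℝ)
    (hf : ContDiff ℝ 2 f)
    (hgrad : ∀ x, ‖gradient f x‖ < 1)
    (hsurj : ∀ p : EuclideanSpace ℝ (Fin m), ‖p‖ < 1 →
      ∃ y, (hessianMatrix f y).PosSemidef ∧ gradient f y = p) :
    volume (Metric.ball (0 : EuclideanSpace ℝ (Fin m)) 1) ≤
      ∫⁻ x, ENNReal.ofReal (|meanCurvFn f x| ^ m * tiltFn f x ^ (-(m : ℝ) - 2)) := by
  have hdiff : Differentiable ℝ (gradient f) := (hf.gradient (n := 1)).differentiable one_ne_zero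
  set S := {y | (hessianMatrix f y).PosSemidef}
  have hS : MeasurableSet S :=
    (isClosed_setOf_posSemidef.preimage (continuous_hessianMatrix hf)).measurableSet
  have hball : Metric.ball 0 1 ⊆ gradient f '' S := fun p hp => hsurj p (mem_ball_zero_iff.mp hp)
  calc volume (Metric.ball (0 : EuclideanSpace ℝ (Fin m)) 1)
      ≤ volume (gradient f '' S) := measure_mono hball
    _ ≤ ∫⁻ y in S, ENNReal.ofReal |(fderiv ℝ (gradient f) y).det| :=
        addHaar_image_le_lintegral_abs_det_fderiv volume hS fun y _ =>
          (hdiff y).hasFDerivAt.hasFDerivWithinAt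
    _ ≤ ∫⁻ y in S, ENNReal.ofReal (|meanCurvFn f y| ^ m * tiltFn f y ^ (-(m : ℝ) - 2)) := by
        refine setLIntegral_mono' hS fun y hy => ENNReal.ofReal_le_ofReal ?_
        rw [← det_hessianMatrix, abs_of_nonneg hy.det_nonneg]
        exact det_hessianMatrix_le_of_posSemidef f y (hgrad y) hy
    _ ≤ _ := setLIntegral_le_lintegral _ _
end
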